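/- If 0 ≤ ε < 1/3, then under the product probability measure ν_ε on S (coordinates i.i.d. with ν_ε(X_i = −1) = ε and ν_ε(X_i = +1) = 1 − ε), almost surely every site i ∈ ℤ² has a finite context: ν_ε({x ∈ S : for every i ∈ ℤ² there exists a finite L¹-connected set F ⊆ ℤ² with i ∈ int F and x_j = +1 for all j ∈ ∂F}) = 1. -/

import Mathlib

open MeasureTheory

/-- Sites of the lattice `ℤ²`. -/
abbrev Site : Type := ℤ × ℤ

/-- Configuration space `S = {-1,+1}^{ℤ²}`, where `false` encodes `-1` and `true` encodes `+1`
(so that the order `false < true` corresponds to `-1 < +1`). -/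
abbrev Conf : Type := Site → Bool

noncomputable section

/-- `ν` is the Bernoulli product measure on `S` under which the coordinates are i.i.d. with
`ν(X_i = -1) = ε` and `ν(X_i = +1) = 1 - ε`: we characterize it through its values on
cylinder sets. -/
def IsBernoulliProduct (ν : Measure Conf) (ε : ℝ) : Prop :=
  ∀ (Λ : Finset Site) (η : Site → Bool),
    ν {x | ∀ i ∈ Λ, x i = η i} =
      ∏ i ∈ Λ, ENNReal.ofReal (if η i = true then 1 - ε else ε)

/-- The pointwise minimum map `(x¹, x²) ↦ (i ↦ x¹_i ∧ x²_i)`. -/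
def minMap (p : Conf × Conf) : Conf := fun i => p.1 i && p.2 i

/-- The partially observed field `P^ε`: the pushforward of `μ ⊗ ν` under the pointwise
minimum map. -/
def Pe (μ ν : Measure Conf) : Measure Conf := (μ.prod ν).map minMap


/-- The `L¹`-distance `‖a - b‖₁` on `ℤ²`. -/
def L1dist (a b : Site) : ℤ := |a.1 - b.1| + |a.2 - b.2|

/-- A self-avoiding path of length `n` in `ℤ²`: a finite sequence `(i₁, …, i_n)` of sites
such that `i_j` and `i_k` are `L¹`-neighbors if and only if `|j - k| = 1`. -/
def IsSAPath {n : ℕ} (p : Fin n → Site) : Prop :=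
  ∀ j k : Fin n, L1dist (p j) (p k) = 1 ↔ |(j : ℤ) - (k : ℤ)| = 1

/-- The boundary `∂F = {j ∈ F : ∃ k ∉ F, ‖j - k‖₁ = 1}` of a set `F ⊆ ℤ²`. -/
def bdry (F : Set Site) : Set Site := {j ∈ F | ∃ k ∉ F, L1dist j k = 1}

/-- The interior `int F = F \ ∂F` of a set `F ⊆ ℤ²`. -/
def intr (F : Set Site) : Set Site := F \ bdry F

/-- `F` is `L¹`-connected: any two distinct points of `F` are joined by a finite path of
sites of `F` in which consecutive sites are `L¹`-neighbors. -/
def L1Connected (F : Set Site) : Prop :=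
  ∀ a ∈ F, ∀ b ∈ F, a ≠ b → ∃ n : ℕ, ∃ p : Fin (n + 1) → Site,
    p 0 = a ∧ p (Fin.last n) = b ∧ (∀ k, p k ∈ F) ∧
      ∀ k : Fin n, L1dist (p k.castSucc) (p k.succ) = 1

/-- Site `i` has a finite context in the configuration `x`: there is a finite
`L¹`-connected set `F ⊆ ℤ²` with `i ∈ int F` and `x_j = +1` for all `j ∈ ∂F`. -/
def HasFiniteContext (x : Conf) (i : Site) : Prop :=
  ∃ F : Set Site, F.Finite ∧ L1Connected F ∧ i ∈ intr F ∧ ∀ j ∈ bdry F, x j = true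

lemma L1dist_comm (a b : Site) : L1dist a b = L1dist b a := by
  simp [L1dist, abs_sub_comm]

lemma L1dist_self (a : Site) : L1dist a a = 0 := by simp [L1dist]

lemma L1dist_triangle (a b c : Site) : L1dist a c ≤ L1dist a b + L1dist b c := by
  have h1 := abs_sub_le a.1 b.1 c.1
  have h2 := abs_sub_le a.2 b.2 c.2
  unfold L1dist; omega

lemma step_cases {a b : Site} (h : L1dist a b = 1) :
    b - a = (1,0) ∨ b - a = (-1,0) ∨ b - a = (0,1) ∨ b - a = (0,-1) := by
  have hb1 : (b - a).1 = b.1 - a.1 := rfl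
  have hb2 : (b - a).2 = b.2 - a.2 := rfl
  unfold L1dist at h
  rcases abs_cases (a.1 - b.1) with ⟨h1, _⟩ | ⟨h1, _⟩ <;>
    rcases abs_cases (a.2 - b.2) with ⟨h2, _⟩ | ⟨h2, _⟩ <;>
  · rw [h1, h2] at h
    rcases Prod.mk.injEq .. ▸ rfl with _
    have : b.1 - a.1 = 1 ∧ b.2 - a.2 = 0 ∨ b.1 - a.1 = -1 ∧ b.2 - a.2 = 0 ∨
        b.1 - a.1 = 0 ∧ b.2 - a.2 = 1 ∨ b.1 - a.1 = 0 ∧ b.2 - a.2 = -1 := by omega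
    rcases this with ⟨u,v⟩|⟨u,v⟩|⟨u,v⟩|⟨u,v⟩ <;>
      [left; (right;left); (right;right;left); (right;right;right)] <;>
      exact Prod.ext (by rw [hb1, u]) (by rw [hb2, v])

def vec (a : ZMod 4) : Site :=
  if a = 0 then (1,0) else if a = 1 then (0,1) else if a = 2 then (-1,0) else (0,-1)

def dir (v : Site) : ZMod 4 :=
  if v = (1,0) then 0 else if v = (0,1) then 1 else if v = (-1,0) then 2 else 3

lemma vec_dir {a b : Site} (h : L1dist a b = 1) : a + vec (dir (b - a)) = b := by
  have hb : b = (b - a) + a := by ring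
  have e1 : vec (dir ((1:ℤ),(0:ℤ))) = (1,0) := by decide
  have e2 : vec (dir ((-1:ℤ),(0:ℤ))) = (-1,0) := by decide
  have e3 : vec (dir ((0:ℤ),(1:ℤ))) = (0,1) := by decide
  have e4 : vec (dir ((0:ℤ),(-1:ℤ))) = (0,-1) := by decide
  clear hb
  rcases step_cases h with h' | h' | h' | h' <;>
    [rw [h', e1]; rw [h', e2]; rw [h', e3]; rw [h', e4]] <;>
    rw [sub_eq_iff_eq_add] at h' <;> rw [h'] <;> ring

def walk (i : Site) (d : ℕ → ZMod 4) : ℕ → Site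
  | 0 => i
  | m+1 => walk i d m + vec (d m)

lemma vec_add_two : ∀ a : ZMod 4, vec (a + 2) = - vec a := by decide

lemma walk_congr (i : Site) (d d' : ℕ → ZMod 4) (m : ℕ) (h : ∀ j < m, d j = d' j) :
    walk i d m = walk i d' m := by
  induction m with
  | zero => rfl
  | succ k ih => simp only [walk, ih (fun j hj => h j (by omega)), h k (by omega)]

/-- vertex set: i together with the minus sites -/
def V (x : Conf) (i : Site) : Set Site := {v | v = i ∨ x v = false}

def siteGraph (x : Conf) (i : Site) : SimpleGraph Site where
  Adj a b := L1dist a b = 1 ∧ a ∈ V x i ∧ b ∈ V x i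
  symm := ⟨by rintro a b ⟨h1, h2, h3⟩; exact ⟨(L1dist_comm a b) ▸ h1, h3, h2⟩⟩
  loopless := ⟨by rintro a ⟨h1, -⟩; rw [L1dist_self] at h1; exact one_ne_zero h1.symm⟩

def cluster (x : Conf) (i : Site) : Set Site := {j | (siteGraph x i).Reachable i j}

lemma support_mem_V {x : Conf} {i : Site} {a b : Site} (w : (siteGraph x i).Walk a b)
    (ha : a ∈ V x i) : ∀ v ∈ w.support, v ∈ V x i := by
  induction w with
  | nil => intro v hv; rw [SimpleGraph.Walk.support_nil, List.mem_singleton] at hv; exact hv ▸ ha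
  | cons h w ih =>
    intro v hv
    rw [SimpleGraph.Walk.support_cons, List.mem_cons] at hv
    rcases hv with rfl | hv
    · exact ha
    · exact ih h.2.2 v hv

lemma cluster_subset_V {x : Conf} {i : Site} : cluster x i ⊆ V x i := by
  intro j hj
  obtain ⟨w⟩ := hj
  exact support_mem_V w (Or.inl rfl) j w.end_mem_support

lemma cluster_support_subset {x : Conf} {i : Site} {a b : Site} (w : (siteGraph x i).Walk a b)
    (ha : a ∈ cluster x i) : ∀ v ∈ w.support, v ∈ cluster x i := by
  intro v hv
  exact ha.trans ⟨w.takeUntil v hv⟩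

/-- convert a chain list into the `L1Connected` path format -/
lemma list_to_path {F : Set Site} {a b : Site} (L : List Site) (hne : L ≠ [])
    (hhead : L.head hne = a) (hlast : L.getLast hne = b)
    (hchain : List.Chain' (fun u v => L1dist u v = 1) L) (hmem : ∀ v ∈ L, v ∈ F) :
    ∃ n : ℕ, ∃ p : Fin (n + 1) → Site,
      p 0 = a ∧ p (Fin.last n) = b ∧ (∀ k, p k ∈ F) ∧
        ∀ k : Fin n, L1dist (p k.castSucc) (p k.succ) = 1 := by
  obtain ⟨n, hn⟩ : ∃ n, L.length = n + 1 :=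
    ⟨L.length - 1, by have := List.length_pos_iff.mpr hne; omega⟩
  refine ⟨n, fun k => L.get ⟨k.val, by omega⟩, ?_, ?_, ?_, ?_⟩
  · rw [← hhead, List.head_eq_getElem]; rfl
  · rw [← hlast, List.getLast_eq_getElem]
    have : L.length - 1 = n := by omega
    simp only [List.get_eq_getElem, Fin.last, this]
  · intro k; exact hmem _ (List.get_mem _ _)
  · intro k
    have := List.isChain_iff_getElem.mp hchain k.val (by omega)
    convert this using 2 <;> rfl

def ctx (x : Conf) (i : Site) : Set Site :=
  cluster x i ∪ {k | ∃ j ∈ cluster x i, L1dist j k = 1}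

lemma cluster_subset_ctx {x : Conf} {i : Site} : cluster x i ⊆ ctx x i := Set.subset_union_left

lemma reach_list {x : Conf} {i : Site} {a : Site} (ha : a ∈ ctx x i) :
    ∃ L : List Site, ∃ hne : L ≠ [], L.head hne = i ∧ L.getLast hne = a ∧
      List.Chain' (fun u v => L1dist u v = 1) L ∧ ∀ v ∈ L, v ∈ ctx x i := by
  have walkcase : ∀ c ∈ cluster x i, ∃ L : List Site, ∃ hne : L ≠ [],
      L.head hne = i ∧ L.getLast hne = c ∧
      List.Chain' (fun u v => L1dist u v = 1) L ∧ ∀ v ∈ L, v ∈ cluster x i := by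
    intro c hc
    obtain ⟨w⟩ := hc
    refine ⟨w.support, w.support_ne_nil, ?_, ?_, ?_, ?_⟩
    · exact w.head_support
    · exact w.getLast_support
    · exact w.isChain_adj_support.imp (fun a b h => h.1)
    · exact cluster_support_subset w (SimpleGraph.Reachable.refl i)
  rcases ha with hc | ⟨c, hc, hdist⟩
  · obtain ⟨L, hne, h1, h2, h3, h4⟩ := walkcase a hc
    exact ⟨L, hne, h1, h2, h3, fun v hv => cluster_subset_ctx (h4 v hv)⟩
  · obtain ⟨L, hne, h1, h2, h3, h4⟩ := walkcase c hc
    refine ⟨L ++ [a], by simp, ?_, ?_, ?_, ?_⟩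
    · rw [List.head_append_of_ne_nil hne]; exact h1
    · simp [List.getLast_append]
    · refine List.IsChain.append h3 (List.isChain_singleton a) ?_
      intro u hu v hv
      rw [List.getLast?_eq_getLast hne] at hu
      rw [List.head?_cons] at hv
      obtain rfl : u = c := by rw [← h2]; exact (Option.some_inj.mp hu).symm
      obtain rfl : v = a := (Option.some_inj.mp hv).symm
      exact hdist
    · intro v hv
      rcases List.mem_append.mp hv with hv | hv
      · exact cluster_subset_ctx (h4 v hv)
      · rw [List.mem_singleton] at hv
        exact hv ▸ Or.inr ⟨c, hc, hdist⟩

lemma ctx_l1connected (x : Conf) (i : Site) : L1Connected (ctx x i) := by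
  intro a ha b hb hab
  obtain ⟨La, hne, ha1, ha2, ha3, ha4⟩ := reach_list ha
  obtain ⟨Lb, hne', hb1, hb2, hb3, hb4⟩ := reach_list hb
  set R : Site → Site → Prop := fun u v => L1dist u v = 1 with hR
  have hrevne : La.reverse ≠ [] := by simpa using hne
  have hrevchain : List.Chain' R La.reverse := by
    rw [show List.Chain' R La.reverse ↔ _ from List.isChain_reverse]
    exact ha3.imp (fun u v h => (L1dist_comm v u).trans h)
  have hrevhead : La.reverse.head hrevne = a := by rw [List.head_reverse]; exact ha2
  have hrevlast : La.reverse.getLast hrevne = i := by rw [List.getLast_reverse]; exact ha1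
  rcases Lb with - | ⟨hd, tl⟩
  · exact absurd rfl hne'
  obtain rfl : hd = i := hb1
  rcases tl with - | ⟨c, tl⟩
  · -- Lb = [i], so b = i
    obtain rfl : hd = b := hb2
    exact list_to_path (F := ctx x hd) La.reverse hrevne hrevhead hrevlast hrevchain
      (fun v hv => ha4 v (List.mem_reverse.mp hv))
  · have ht : c :: tl ≠ [] := by simp
    have hM : La.reverse ++ c :: tl ≠ [] := by simp [hrevne]
    refine list_to_path (F := ctx x hd) (La.reverse ++ c :: tl) hM ?_ ?_ ?_ ?_
    · rw [List.head_append_of_ne_nil hrevne]; exact hrevhead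
    · rw [List.getLast_append_of_ne_nil _ ht, ← hb2]
      exact (List.getLast_cons ht).symm
    · refine List.IsChain.append hrevchain (hb3.tail) ?_
      intro u hu v hv
      rw [List.getLast?_eq_getLast hrevne] at hu
      obtain rfl : u = hd := by rw [← hrevlast]; exact (Option.some_inj.mp hu).symm
      obtain rfl : v = c := (Option.some_inj.mp hv).symm
      exact (List.isChain_cons_cons.mp hb3).1
    · intro v hv
      rcases List.mem_append.mp hv with hv | hv
      · exact ha4 v (List.mem_reverse.mp hv)
      · exact hb4 v (List.mem_cons_of_mem hd hv)

lemma nbrs_finite (j : Site) : {k : Site | L1dist j k = 1}.Finite := by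
  apply Set.Finite.subset (s := ({j + (1,0), j + (-1,0), j + (0,1), j + (0,-1)} : Set Site))
    (((((Set.finite_singleton _).insert _).insert _).insert _))
  intro k hk
  have hk' := step_cases (a := j) (b := k) hk
  have hj : ∀ v : Site, k - j = v → k = j + v := by
    intro v hv; rw [← hv]; ring
  rcases hk' with h | h | h | h <;> simp [Set.mem_insert_iff, hj _ h]

lemma ctx_finite {x : Conf} {i : Site} (h : (cluster x i).Finite) : (ctx x i).Finite := by
  refine h.union (Set.Finite.subset (Set.Finite.biUnion h (fun j _ => nbrs_finite j)) ?_)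
  rintro k ⟨j, hj, hd⟩
  exact Set.mem_biUnion hj hd

lemma hasFiniteContext_of_cluster_finite {x : Conf} {i : Site}
    (h : (cluster x i).Finite) : HasFiniteContext x i := by
  have hicl : i ∈ cluster x i := SimpleGraph.Reachable.refl i
  have hnbr : ∀ j ∈ cluster x i, ∀ k, L1dist j k = 1 → k ∈ ctx x i :=
    fun j hj k hk => Or.inr ⟨j, hj, hk⟩
  have hclint : ∀ j ∈ cluster x i, j ∉ bdry (ctx x i) := by
    rintro j hj ⟨-, k, hk, hdk⟩
    exact hk (hnbr j hj k hdk)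
  refine ⟨ctx x i, ctx_finite h, ctx_l1connected x i, ⟨cluster_subset_ctx hicl, hclint i hicl⟩, ?_⟩
  intro j hjbd
  by_contra hjx
  have hjfalse : x j = false := by
    cases hx : x j
    · rfl
    · exact absurd hx hjx
  rcases hjbd.1 with hj | ⟨c, hc, hdc⟩
  · exact hclint j hj hjbd
  · have hadj : (siteGraph x i).Adj c j :=
      ⟨hdc, cluster_subset_V hc, Or.inr hjfalse⟩
    exact hclint j (hc.trans hadj.reachable) hjbd

def extd (n : ℕ) (e : Fin n → ZMod 4) : ℕ → ZMod 4 := fun m => if h : m < n then e ⟨m, h⟩ else 0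

lemma ball_finite (i : Site) (r : ℤ) : {j : Site | L1dist i j ≤ r}.Finite := by
  apply Set.Finite.subset (((Set.finite_Icc (i.1 - r) (i.1 + r)).prod
    (Set.finite_Icc (i.2 - r) (i.2 + r))))
  intro j hj
  simp only [Set.mem_setOf_eq] at hj
  unfold L1dist at hj
  have h1 := abs_nonneg (i.1 - j.1)
  have h2 := abs_nonneg (i.2 - j.2)
  have h1' := le_abs_self (i.1 - j.1)
  have h1'' := neg_abs_le (i.1 - j.1)
  have h2' := le_abs_self (i.2 - j.2)
  have h2'' := neg_abs_le (i.2 - j.2)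
  constructor <;> simp only [Set.mem_Icc] <;> omega

lemma walk_length_ge {x : Conf} {i : Site} {a b : Site} (w : (siteGraph x i).Walk a b) :
    L1dist a b ≤ (w.length : ℤ) := by
  induction w with
  | nil => rw [L1dist_self]; simp
  | cons h w ih =>
    rename_i u v c
    rw [SimpleGraph.Walk.length_cons]
    have ht := L1dist_triangle u v c
    rw [h.1] at ht
    push_cast
    omega

lemma exists_sa_walk {x : Conf} {i : Site} (h : (cluster x i).Infinite) (n : ℕ) :
    ∃ e : Fin (n+1) → ZMod 4,
      (Function.Injective fun m : Fin (n+2) => walk i (extd (n+1) e) m.val) ∧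
      ∀ m, 1 ≤ m → m ≤ n+1 → x (walk i (extd (n+1) e) m) = false := by
  obtain ⟨j, hj, hjball⟩ : ∃ j ∈ cluster x i, j ∉ {k : Site | L1dist i k ≤ (n+1 : ℤ)} := by
    obtain ⟨j, hj⟩ := (h.diff (ball_finite i (n+1))).nonempty
    exact ⟨j, hj.1, hj.2⟩
  simp only [Set.mem_setOf_eq, not_le] at hjball
  obtain ⟨w⟩ := hj
  set p := w.bypass with hp
  have hpath : p.IsPath := w.bypass_isPath
  have hlen : n + 2 ≤ p.length := by
    have := walk_length_ge p
    omega
  set S := p.support with hS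
  have hSlen : S.length = p.length + 1 := p.length_support
  have hPS : p.support.length = S.length := rfl
  have hS0 : ∀ hh, S.get ⟨0, hh⟩ = i := by
    intro hh
    have := p.head_support
    rwa [List.head_eq_getElem] at this
  have hnodup : S.Nodup := hpath.support_nodup
  have hadj : ∀ (m : ℕ) (hm : m + 1 < S.length),
      L1dist (S.get ⟨m, by omega⟩) (S.get ⟨m+1, hm⟩) = 1 := by
    intro m hm
    exact (List.isChain_iff_getElem.mp p.isChain_adj_support m (by omega)).1
  have hgetinj : ∀ (m1 m2 : ℕ) (h1 : m1 < S.length) (h2 : m2 < S.length),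
      S.get ⟨m1, h1⟩ = S.get ⟨m2, h2⟩ → m1 = m2 := by
    intro m1 m2 h1 h2 hh
    have := (List.nodup_iff_injective_get.mp hnodup) hh
    simpa using congrArg Fin.val this
  set e : Fin (n+1) → ZMod 4 := fun k =>
    dir (S.get ⟨k.val+1, by have := k.isLt; omega⟩ - S.get ⟨k.val, by have := k.isLt; omega⟩)
    with he
  have hwalk : ∀ m : ℕ, (hm : m ≤ n + 1) → walk i (extd (n+1) e) m = S.get ⟨m, by omega⟩ := by
    intro m hm
    induction m with
    | zero => exact (hS0 _).symm
    | succ k ih =>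
      have hk := ih (by omega)
      show walk i (extd (n+1) e) k + vec (extd (n+1) e k) = _
      rw [hk]
      have hext : extd (n+1) e k = dir (S.get ⟨k+1, by omega⟩ - S.get ⟨k, by omega⟩) := by
        rw [he]
        unfold extd
        rw [dif_pos (by omega : k < n+1)]
      rw [hext]
      exact vec_dir (hadj k (by omega))
  refine ⟨e, ?_, ?_⟩
  · intro m1 m2 hm
    simp only at hm
    rw [hwalk m1.val (by have := m1.isLt; omega), hwalk m2.val (by have := m2.isLt; omega)] at hm
    exact Fin.ext (hgetinj _ _ _ _ hm)
  · intro m h1m hm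
    rw [hwalk m hm]
    have hmem : S.get ⟨m, by omega⟩ ∈ V x i :=
      support_mem_V p (Or.inl rfl) _ (List.get_mem _ _)
    rcases hmem with hmi | hfalse
    · exfalso
      have hne0 : m ≠ 0 := by omega
      exact hne0 (hgetinj m 0 (by omega) (by omega) (by rw [hS0, hmi]))
    · exact hfalse

def t3 (c : ZMod 4) : Fin 3 := if c = 0 then 0 else if c = 1 then 1 else 2
def g3 (t : Fin 3) : ZMod 4 := if t = 0 then 0 else if t = 1 then 1 else 3

lemma g3_t3 : ∀ c : ZMod 4, c ≠ 2 → g3 (t3 c) = c := by decide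

lemma nb_of_inj {n : ℕ} {i : Site} {e : Fin (n+1) → ZMod 4}
    (hinj : Function.Injective fun m : Fin (n+2) => walk i (extd (n+1) e) m.val) :
    ∀ k : Fin n, e k.succ - e k.castSucc ≠ 2 := by
  intro k hk2
  have hklt := k.isLt
  set d := extd (n+1) e with hd
  have hdm : d k.val = e k.castSucc := by
    rw [hd]; unfold extd
    rw [dif_pos (by omega : k.val < n+1)]
    rfl
  have hdm1 : d (k.val+1) = e k.succ := by
    rw [hd]; unfold extd
    rw [dif_pos (by omega : k.val+1 < n+1)]
    rfl
  have hsucc : e k.succ = e k.castSucc + 2 := by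
    rw [← hk2]; ring
  have hww : walk i d (k.val + 2) = walk i d k.val := by
    show walk i d (k.val+1) + vec (d (k.val+1)) = _
    show walk i d k.val + vec (d k.val) + vec (d (k.val+1)) = _
    rw [hdm, hdm1, hsucc, vec_add_two]
    rw [add_neg_cancel_right]
  have := hinj (a₁ := ⟨k.val + 2, by omega⟩) (a₂ := ⟨k.val, by omega⟩) hww
  have := congrArg Fin.val this
  simp at this

def Dset (i : Site) (n : ℕ) : Finset (Fin (n+1) → ZMod 4) :=
  Finset.univ.filter (fun e => Function.Injective fun m : Fin (n+2) => walk i (extd (n+1) e) m.val)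

lemma Dset_card (i : Site) (n : ℕ) : (Dset i n).card ≤ 4 * 3 ^ n := by
  have hcard : Fintype.card (ZMod 4 × (Fin n → Fin 3)) = 4 * 3 ^ n := by
    simp [Fintype.card_fun]
  rw [← hcard, ← Finset.card_univ]
  apply Finset.card_le_card_of_injOn
    (fun e => (e 0, fun k : Fin n => t3 (e k.succ - e k.castSucc)))
    (fun _ _ => Finset.mem_univ _)
  intro e he e' he' hΦ
  have hnb := nb_of_inj (Finset.mem_filter.mp (Finset.mem_coe.mp he)).2
  have hnb' := nb_of_inj (Finset.mem_filter.mp (Finset.mem_coe.mp he')).2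
  have h0 : e 0 = e' 0 := congrArg Prod.fst hΦ
  have ht : ∀ k : Fin n, t3 (e k.succ - e k.castSucc) = t3 (e' k.succ - e' k.castSucc) :=
    fun k => congrFun (congrArg Prod.snd hΦ) k
  funext k
  induction k using Fin.induction with
  | zero => exact h0
  | succ k ih =>
    have h1 : e k.succ = e k.castSucc + g3 (t3 (e k.succ - e k.castSucc)) := by
      rw [g3_t3 _ (hnb k)]; ring
    have h2 : e' k.succ = e' k.castSucc + g3 (t3 (e' k.succ - e' k.castSucc)) := by
      rw [g3_t3 _ (hnb' k)]; ring
    rw [h1, h2, ht k, ih]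

lemma measure_bad_le (ε : ℝ) (ν : Measure Conf) (hν : IsBernoulliProduct ν ε)
    (i : Site) (n : ℕ) :
    ν {x | ¬ HasFiniteContext x i} ≤ (4 * 3 ^ n : ℕ) * ENNReal.ofReal ε ^ (n+1) := by
  classical
  set Ev : (Fin (n+1) → ZMod 4) → Set Conf := fun e =>
    {x | ∀ m ∈ Finset.Icc 1 (n+1), x (walk i (extd (n+1) e) m) = false} with hEv
  have hsub : {x | ¬ HasFiniteContext x i} ⊆ ⋃ e ∈ Dset i n, Ev e := by
    intro x hx
    have hinf : (cluster x i).Infinite := by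
      intro hfin
      exact hx (hasFiniteContext_of_cluster_finite hfin)
    obtain ⟨e, hinj, hfalse⟩ := exists_sa_walk hinf n
    have hmem : e ∈ Dset i n := Finset.mem_filter.mpr ⟨Finset.mem_univ _, hinj⟩
    refine Set.mem_biUnion hmem ?_
    intro m hm
    rw [Finset.mem_Icc] at hm
    exact hfalse m hm.1 hm.2
  have hEe : ∀ e ∈ Dset i n, ν (Ev e) = ENNReal.ofReal ε ^ (n+1) := by
    intro e he
    have hinj := (Finset.mem_filter.mp he).2
    set Λ : Finset Site := (Finset.Icc 1 (n+1)).image (fun m => walk i (extd (n+1) e) m)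
      with hΛ
    have hset : Ev e = {x | ∀ j ∈ Λ, x j = (fun _ => false : Site → Bool) j} := by
      ext x
      simp only [hEv, hΛ, Set.mem_setOf_eq, Finset.mem_image]
      constructor
      · rintro hx j ⟨m, hm, rfl⟩
        exact hx m hm
      · intro hx m hm
        exact hx _ ⟨m, hm, rfl⟩
    have hinjOn : Set.InjOn (fun m => walk i (extd (n+1) e) m) ↑(Finset.Icc 1 (n+1)) := by
      intro m1 h1 m2 h2 hw
      rw [Finset.mem_coe, Finset.mem_Icc] at h1 h2
      have : (⟨m1, by omega⟩ : Fin (n+2)) = ⟨m2, by omega⟩ := hinj hw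
      simpa using congrArg Fin.val this
    have hcard : Λ.card = n + 1 := by
      rw [hΛ, Finset.card_image_of_injOn hinjOn, Nat.card_Icc]
      omega
    rw [hset, hν Λ (fun _ => false)]
    rw [Finset.prod_congr rfl (fun j _ => by simp : ∀ j ∈ Λ,
      ENNReal.ofReal (if (fun _ => false : Site → Bool) j = true then 1 - ε else ε)
        = ENNReal.ofReal ε)]
    rw [Finset.prod_const, hcard]
  calc ν {x | ¬ HasFiniteContext x i} ≤ ν (⋃ e ∈ Dset i n, Ev e) := measure_mono hsub
    _ ≤ ∑ e ∈ Dset i n, ν (Ev e) := measure_biUnion_finset_le _ _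
    _ = (Dset i n).card * ENNReal.ofReal ε ^ (n+1) := by
        rw [Finset.sum_congr rfl hEe, Finset.sum_const, nsmul_eq_mul]
    _ ≤ _ := by
        apply mul_le_mul_left
        exact_mod_cast Nat.cast_le.mpr (Dset_card i n)

lemma measure_bad_zero (ε : ℝ) (hε0 : 0 ≤ ε) (hε1 : ε < 1 / 3) (ν : Measure Conf)
    (hν : IsBernoulliProduct ν ε) (i : Site) :
    ν {x | ¬ HasFiniteContext x i} = 0 := by
  refine le_antisymm ?_ zero_le
  have hbound : ∀ n : ℕ, ν {x | ¬ HasFiniteContext x i}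
      ≤ ENNReal.ofReal (4 * ε * (3 * ε) ^ n) := by
    intro n
    refine le_trans (measure_bad_le ε ν hν i n) (le_of_eq ?_)
    rw [← ENNReal.ofReal_natCast (4 * 3 ^ n), ← ENNReal.ofReal_pow hε0,
      ← ENNReal.ofReal_mul (by positivity)]
    congr 1
    push_cast
    ring
  have htend : Filter.Tendsto (fun n : ℕ => ENNReal.ofReal (4 * ε * (3 * ε) ^ n))
      Filter.atTop (nhds 0) := by
    have h1 : Filter.Tendsto (fun n : ℕ => 4 * ε * (3 * ε) ^ n) Filter.atTop (nhds 0) := by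
      have h2 := tendsto_pow_atTop_nhds_zero_of_lt_one (by positivity : (0:ℝ) ≤ 3 * ε)
        (by linarith : 3 * ε < 1)
      simpa using h2.const_mul (4 * ε)
    have := ENNReal.tendsto_ofReal h1
    simpa using this
  exact ge_of_tendsto htend (Filter.Eventually.of_forall hbound)

theorem statement10 (ε : ℝ) (hε0 : 0 ≤ ε) (hε1 : ε < 1 / 3) (ν : Measure Conf)
    [IsProbabilityMeasure ν] (hν : IsBernoulliProduct ν ε) :
    ν {x | ∀ i : Site, HasFiniteContext x i} = 1 := by
  have hbad : ν (⋃ i : Site, {x | ¬ HasFiniteContext x i}) = 0 := by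
    refine le_antisymm (le_trans (measure_iUnion_le _) ?_) zero_le
    simp [measure_bad_zero ε hε0 hε1 ν hν]
  refine le_antisymm prob_le_one ?_
  have huniv : (Set.univ : Set Conf) ⊆ {x | ∀ i : Site, HasFiniteContext x i}
      ∪ ⋃ i : Site, {x | ¬ HasFiniteContext x i} := by
    intro x _
    by_cases hx : ∀ i : Site, HasFiniteContext x i
    · exact Or.inl hx
    · push_neg at hx
      obtain ⟨i, hi⟩ := hx
      exact Or.inr (Set.mem_iUnion.mpr ⟨i, hi⟩)
  calc (1 : ENNReal) = ν Set.univ := (measure_univ).symm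
    _ ≤ ν ({x | ∀ i : Site, HasFiniteContext x i} ∪ ⋃ i : Site, {x | ¬ HasFiniteContext x i}) :=
        measure_mono huniv
    _ ≤ ν {x | ∀ i : Site, HasFiniteContext x i} + ν (⋃ i : Site, {x | ¬ HasFiniteContext x i}) :=
        measure_union_le _ _
    _ = ν {x | ∀ i : Site, HasFiniteContext x i} := by rw [hbad, add_zero]


end
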